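/- Approximation up to administrative reductions preserves normal forms: if C' ≥ C and C is return(V), then C' →* return(V') for some V' ≥ V; and if C is σ(V; y.B), then C' →* σ(V'; y.B') for some V' ≥ V and B' ≥ B. -/

import Mathlib

/-! HEPCF: EPCF extended with effect handlers. A handler consists of a return
clause `Cr` (binding the returned value, de Bruijn index 0) and, for each
operation `σ`, a clause `Hop σ` binding the parameter `x` (index 1) and the
continuation `r` (index 0). -/

namespace HEPCF

mutual
/-- HEPCF values (de Bruijn representation). -/
inductive HVal (CV Op : Type) : Type
  | cv : CV → HVal CV Op
  | num : ℕ → ℕ → HVal CV Op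
  | var : ℕ → HVal CV Op
  | lam : HComp CV Op → HVal CV Op
  | fixv : HVal CV Op → HVal CV Op
/-- HEPCF computations (de Bruijn representation). -/
inductive HComp (CV Op : Type) : Type
  | app : HVal CV Op → HVal CV Op → HComp CV Op
  | ret : HVal CV Op → HComp CV Op
  | letin : HComp CV Op → HComp CV Op → HComp CV Op
  | opc : Op → HVal CV Op → HComp CV Op → HComp CV Op
  | case : (k : ℕ) → HVal CV Op → (Fin k → HComp CV Op) → HComp CV Op
  | handle : HComp CV Op → (Op → HComp CV Op) → HComp CV Op → HComp CV Op
end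

variable {CV Op : Type}

/-- Lifting of a renaming under a binder. -/
def upr (ρ : ℕ → ℕ) : ℕ → ℕ
  | 0 => 0
  | n + 1 => ρ n + 1

mutual
/-- Renaming of variables in values. -/
def renV (ρ : ℕ → ℕ) : HVal CV Op → HVal CV Op
  | .cv v => .cv v
  | .num n k => .num n k
  | .var n => .var (ρ n)
  | .lam C => .lam (renC (upr ρ) C)
  | .fixv V => .fixv (renV (upr ρ) V)
/-- Renaming of variables in computations. -/
def renC (ρ : ℕ → ℕ) : HComp CV Op → HComp CV Op
  | .app V W => .app (renV ρ V) (renV ρ W)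
  | .ret V => .ret (renV ρ V)
  | .letin C B => .letin (renC ρ C) (renC (upr ρ) B)
  | .opc σ V C => .opc σ (renV ρ V) (renC (upr ρ) C)
  | .case k V Cs => .case k (renV ρ V) (fun i => renC ρ (Cs i))
  | .handle Cr Hop C =>
      .handle (renC (upr ρ) Cr) (fun σ => renC (upr (upr ρ)) (Hop σ)) (renC ρ C)
end

/-- Lifting of a substitution under a binder. -/
def upsH (σ : ℕ → HVal CV Op) : ℕ → HVal CV Op
  | 0 => .var 0
  | n + 1 => renV Nat.succ (σ n)

mutual
/-- Simultaneous substitution of values for variables, in values. -/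
def subV (σ : ℕ → HVal CV Op) : HVal CV Op → HVal CV Op
  | .cv v => .cv v
  | .num n k => .num n k
  | .var n => σ n
  | .lam C => .lam (subC (upsH σ) C)
  | .fixv V => .fixv (subV (upsH σ) V)
/-- Simultaneous substitution of values for variables, in computations. -/
def subC (σ : ℕ → HVal CV Op) : HComp CV Op → HComp CV Op
  | .app V W => .app (subV σ V) (subV σ W)
  | .ret V => .ret (subV σ V)
  | .letin C B => .letin (subC σ C) (subC (upsH σ) B)
  | .opc op V C => .opc op (subV σ V) (subC (upsH σ) C)
  | .case k V Cs => .case k (subV σ V) (fun i => subC σ (Cs i))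
  | .handle Cr Hop C =>
      .handle (subC (upsH σ) Cr) (fun op => subC (upsH (upsH σ)) (Hop op))
        (subC σ C)
end

/-- Substitution `C[W/x]` of the value `W` for the variable `0`. -/
def subst0C (W : HVal CV Op) (C : HComp CV Op) : HComp CV Op :=
  subC (fun n => match n with | 0 => W | n + 1 => .var n) C

/-- Substitution `V[W/x]` of the value `W` for the variable `0`. -/
def subst0V (W : HVal CV Op) (V : HVal CV Op) : HVal CV Op :=
  subV (fun n => match n with | 0 => W | n + 1 => .var n) V

/-- The simultaneous substitution `[r := A, x := B]` used when a handler
catches an operation (`r` is the innermost bound variable). -/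
def sub2 (A B : HVal CV Op) : ℕ → HVal CV Op
  | 0 => A
  | 1 => B
  | n + 2 => .var n

/-- The value `λy. handle H C` passed as the captured continuation when the
handler `H = (Cr, Hop)` catches an operation with continuation `C`. -/
def contVal (Cr : HComp CV Op) (Hop : Op → HComp CV Op) (C : HComp CV Op) :
    HVal CV Op :=
  .lam (.handle (renC (upr Nat.succ) Cr)
    (fun σ => renC (upr (upr Nat.succ)) (Hop σ)) C)

/-- The reduction relation of HEPCF. -/
inductive HStep : HComp CV Op → HComp CV Op → Prop
  | beta (C : HComp CV Op) (W : HVal CV Op) :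
      HStep (.app (.lam C) W) (subst0C W C)
  | fix (V W : HVal CV Op) :
      HStep (.app (.fixv V) W) (.app (subst0V (.fixv V) V) W)
  | case {n k : ℕ} (h : n < k) (Cs : Fin k → HComp CV Op) :
      HStep (.case k (.num n k) Cs) (Cs ⟨n, h⟩)
  | letRet (V : HVal CV Op) (C : HComp CV Op) :
      HStep (.letin (.ret V) C) (subst0C V C)
  | letCong {C C' : HComp CV Op} (B : HComp CV Op) :
      HStep C C' → HStep (.letin C B) (.letin C' B)
  | letOp (σ : Op) (V : HVal CV Op) (C D : HComp CV Op) :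
      HStep (.letin (.opc σ V C) D) (.opc σ V (.letin C (renC (upr Nat.succ) D)))
  | hCong {C C' : HComp CV Op} (Cr : HComp CV Op) (Hop : Op → HComp CV Op) :
      HStep C C' → HStep (.handle Cr Hop C) (.handle Cr Hop C')
  | hRet (Cr : HComp CV Op) (Hop : Op → HComp CV Op) (V : HVal CV Op) :
      HStep (.handle Cr Hop (.ret V)) (subst0C V Cr)
  | hOp (Cr : HComp CV Op) (Hop : Op → HComp CV Op) (σ : Op)
      (V : HVal CV Op) (C : HComp CV Op) :
      HStep (.handle Cr Hop (.opc σ V C))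
        (subC (sub2 (contVal Cr Hop C) V) (Hop σ))

end HEPCF

namespace HEPCF

variable {CV Op : Type}

/-- Evaluation contexts of HEPCF: `E ::= [] | let x = E in C | handle H E`. -/
inductive HCtx (CV Op : Type) : Type
  | hole : HCtx CV Op
  | letc : HCtx CV Op → HComp CV Op → HCtx CV Op
  | handlec : HComp CV Op → (Op → HComp CV Op) → HCtx CV Op → HCtx CV Op

/-- Plugging a computation into the hole of an evaluation context. -/
def HCtx.plug : HCtx CV Op → HComp CV Op → HComp CV Op
  | .hole, C => C
  | .letc E D, C => .letin (E.plug C) D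
  | .handlec Cr Hop E, C => .handle Cr Hop (E.plug C)

/-- Composition of evaluation contexts: `(E₁.comp E₂).plug C = E₁.plug (E₂.plug C)`. -/
def HCtx.comp : HCtx CV Op → HCtx CV Op → HCtx CV Op
  | .hole, E => E
  | .letc E₁ D, E => .letc (E₁.comp E) D
  | .handlec Cr Hop E₁, E => .handlec Cr Hop (E₁.comp E)

/-- An evaluation context `E` is administrative when (1) `E[return(V)]`
reduces to `return(V)` for every value `V`, and (2) for every operation `σ`,
`E[σ(V;x.C)]` reduces to some `σ(V;x.D)` with `D →* E[C]`. -/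
def Adm (E : HCtx CV Op) : Prop :=
  (∀ V : HVal CV Op,
      Relation.ReflTransGen HStep (E.plug (.ret V)) (.ret V)) ∧
  (∀ (σ : Op) (V : HVal CV Op) (C : HComp CV Op),
      ∃ D : HComp CV Op,
        Relation.ReflTransGen HStep (E.plug (.opc σ V C)) (.opc σ V D) ∧
        Relation.ReflTransGen HStep D (E.plug C))

end HEPCF

namespace HEPCF

variable {CV Op : Type}

mutual
/-- Approximation up to administrative reductions, on values (the closure
under arbitrary contexts of the rules on computations). -/
inductive GeqV : HVal CV Op → HVal CV Op → Prop
  | refl (V : HVal CV Op) : GeqV V V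
  | lam {C C'} : GeqC C C' → GeqV (.lam C) (.lam C')
  | fixv {V V'} : GeqV V V' → GeqV (.fixv V) (.fixv V')
/-- Approximation up to administrative reductions `C ≥ D`: the closure under
arbitrary contexts of the rules `C ≥ C`; `E[C] ≥ D` whenever `adm(E)` and
`C ≥ D`; and `C ≥ D` whenever `C → C'` and `C' ≥ D`. -/
inductive GeqC : HComp CV Op → HComp CV Op → Prop
  | refl (C : HComp CV Op) : GeqC C C
  | adm {E C D} : Adm E → GeqC C D → GeqC (HCtx.plug E C) D
  | step {C C' D} : HStep C C' → GeqC C' D → GeqC C D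
  | app {V V' W W'} : GeqV V V' → GeqV W W' → GeqC (.app V W) (.app V' W')
  | ret {V V'} : GeqV V V' → GeqC (.ret V) (.ret V')
  | letin {C C' B B'} : GeqC C C' → GeqC B B' →
      GeqC (.letin C B) (.letin C' B')
  | opc {σ V V' C C'} : GeqV V V' → GeqC C C' →
      GeqC (.opc σ V C) (.opc σ V' C')
  | case {k V V'} {Cs Cs' : Fin k → HComp CV Op} : GeqV V V' →
      (∀ i, GeqC (Cs i) (Cs' i)) → GeqC (.case k V Cs) (.case k V' Cs')
  | handle {Cr Cr' C C'} {Hop Hop' : Op → HComp CV Op} : GeqC Cr Cr' →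
      (∀ σ, GeqC (Hop σ) (Hop' σ)) → GeqC C C' →
      GeqC (.handle Cr Hop C) (.handle Cr' Hop' C')
end

end HEPCF

/-! Induct on the derivation of `C' ≥ D` with `D` a normal form: besides reflexivity and the
matching congruence rule, only the `step` and `adm` rules can conclude it. A `step` prepends one
reduction. For `adm`, the definition of administrative contexts is exactly what is needed:
`E[C] →* E[return V'] →* return V'`, and `E[C] →* E[σ(V'; B')] →* σ(V'; D)` with
`D →* E[B']`, where `E[B'] ≥ B` by the `adm` rule again. -/

namespace HEPCF

variable {CV Op : Type}

local infix:50 " ⟶* " => Relation.ReflTransGen HStep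

theorem HStep.plug {C C' : HComp CV Op} (E : HCtx CV Op) (h : HStep C C') :
    HStep (E.plug C) (E.plug C') := by
  induction E with
  | hole => exact h
  | letc E D ih => exact .letCong _ ih
  | handlec Cr Hop E ih => exact .hCong _ _ ih

theorem reflTransGen_plug {C C' : HComp CV Op} (E : HCtx CV Op) (h : C ⟶* C') :
    E.plug C ⟶* E.plug C' :=
  h.lift E.plug fun _ _ => HStep.plug E

theorem GeqC.of_reflTransGen {C C' D : HComp CV Op} (h : C ⟶* C') (g : GeqC C' D) :
    GeqC C D := by
  induction h using Relation.ReflTransGen.head_induction_on with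
  | refl => exact g
  | head s _ ih => exact .step s ih

theorem GeqC.exists_reflTransGen_ret {V : HVal CV Op} : ∀ {C' D : HComp CV Op},
    GeqC C' D → D = .ret V → ∃ V', C' ⟶* .ret V' ∧ GeqV V' V
  | _, _, .refl _, rfl => ⟨V, .refl, .refl V⟩
  | _, _, .ret hV, rfl => ⟨_, .refl, hV⟩
  | _, _, .step s h, rfl =>
    let ⟨V', hs, hV⟩ := h.exists_reflTransGen_ret rfl
    ⟨V', .head s hs, hV⟩
  | _, _, .adm hE h, rfl =>
    let ⟨V', hs, hV⟩ := h.exists_reflTransGen_ret rfl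
    ⟨V', (reflTransGen_plug _ hs).trans (hE.1 V'), hV⟩

theorem GeqC.exists_reflTransGen_opc {σ : Op} {V : HVal CV Op} {B : HComp CV Op} :
    ∀ {C' D : HComp CV Op}, GeqC C' D → D = .opc σ V B →
      ∃ V' B', C' ⟶* .opc σ V' B' ∧ GeqV V' V ∧ GeqC B' B
  | _, _, .refl _, rfl => ⟨V, B, .refl, .refl V, .refl B⟩
  | _, _, .opc hV hB, rfl => ⟨_, _, .refl, hV, hB⟩
  | _, _, .step s h, rfl =>
    let ⟨V', B', hs, hV, hB⟩ := h.exists_reflTransGen_opc rfl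
    ⟨V', B', .head s hs, hV, hB⟩
  | _, _, .adm hE h, rfl =>
    let ⟨V', B', hs, hV, hB⟩ := h.exists_reflTransGen_opc rfl
    let ⟨D', hD', hD'B'⟩ := hE.2 σ V' B'
    ⟨V', D', (reflTransGen_plug _ hs).trans hD', hV,
      GeqC.of_reflTransGen hD'B' (.adm hE hB)⟩

end HEPCF

open HEPCF in
/-- Approximation up to administrative reductions preserves normal forms:
if `C' ≥ return(V)` then `C' →* return(V')` for some `V' ≥ V`, and if
`C' ≥ σ(V;y.B)` then `C' →* σ(V';y.B')` with `V' ≥ V` and `B' ≥ B`. -/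
theorem geq_preserves_normal_forms {CV Op : Type} :
    (∀ (C' : HComp CV Op) (V : HVal CV Op), GeqC C' (.ret V) →
      ∃ V', Relation.ReflTransGen HStep C' (.ret V') ∧ GeqV V' V) ∧
    (∀ (C' : HComp CV Op) (σ : Op) (V : HVal CV Op) (B : HComp CV Op),
      GeqC C' (.opc σ V B) →
      ∃ V' B', Relation.ReflTransGen HStep C' (.opc σ V' B') ∧
        GeqV V' V ∧ GeqC B' B) :=
  ⟨fun _ _ h => h.exists_reflTransGen_ret rfl,
   fun _ _ _ _ h => h.exists_reflTransGen_opc rfl⟩
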